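/- Let J(t,x,y) := (4πt)^{−1/2}[exp(−(x−y)²/(4t)) − exp(−(x+y)²/(4t))]. Then there exists a constant C > 0 such that for every t > 0 and x ∈ (0,1], ∫₀¹ |(y/x)·∂J/∂y(t,x,y)| dy ≤ C/√t (with the value at x = 0 defined as y·∂²J/(∂x∂y)(t,0,y), and the bound holding uniformly in x ∈ [0,1]). -/

import Mathlib

/-!
Write `g(s) = s·exp(-s²/(4t))`, so that `∂J/∂y(t,x,y) = (4πt)^{-1/2}·(g(y+x) - g(y-x))/(2t)`.
Where `y ≤ 2x` the factor `y/x` is at most `2`; where `y ≥ 2x` the mean value theorem gives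
`|g(y+x) - g(y-x)| ≤ 2x·sup |g'|` on `[y/2, ∞)`, and `|g'(ξ)| ≤ 3·exp(-y²/(32t))` there, so the
factor `1/x` cancels. In both regions `|K̃|` is bounded by `(4πt)^{-1/2}/(2t)` times translates of
`|g|` (with `t` or `8t`), and `∫ |g| ≤ 4t` over any interval, since `-2t·exp(-s²/(4t))` is an
antiderivative of `g`.
-/

noncomputable def dJdy (t x y : ℝ) : ℝ :=
  (Real.sqrt (4 * Real.pi * t))⁻¹ * (1 / (2 * t)) *
    ((x - y) * Real.exp (-(x - y) ^ 2 / (4 * t)) +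
      (x + y) * Real.exp (-(x + y) ^ 2 / (4 * t)))

/-- `(y/x)·∂J/∂y(t,x,y)` for `x ≠ 0`, and `y·∂²J/(∂x∂y)(t,0,y)` at `x = 0`. -/
noncomputable def Ktilde (t x y : ℝ) : ℝ :=
  if x = 0 then
    y * ((Real.sqrt (4 * Real.pi * t))⁻¹ * (1 / t) *
      Real.exp (-y ^ 2 / (4 * t)) * (1 - y ^ 2 / (2 * t)))
  else (y / x) * dJdy t x y

open Real

lemma abs_one_sub_two_mul_mul_exp_neg_le {u : ℝ} (hu : 0 ≤ u) :
    |1 - 2 * u| * exp (-u) ≤ 3 * exp (-(u / 2)) := by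
  have hquarter : 1 + u / 4 ≤ exp (u / 4) := by linarith [add_one_le_exp (u / 4)]
  have hhalf : (1 + u / 4) ^ 2 ≤ exp (u / 2) := by
    rw [show u / 2 = u / 4 + u / 4 by ring, exp_add, sq]
    exact mul_le_mul hquarter hquarter (by linarith) (exp_pos _).le
  have hpoly : |1 - 2 * u| ≤ 3 * exp (u / 2) := by
    rw [abs_le]
    constructor <;> nlinarith [sq_nonneg (u - 4), exp_pos (u / 2)]
  calc |1 - 2 * u| * exp (-u) ≤ 3 * exp (u / 2) * exp (-u) := by gcongr
    _ = 3 * exp (-(u / 2)) := by rw [mul_assoc, ← exp_add]; ring_nf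

lemma hasDerivAt_neg_sq_div (c s : ℝ) :
    HasDerivAt (fun s : ℝ => -s ^ 2 / c) (-(2 * s) / c) s := by
  simpa using (hasDerivAt_pow 2 s).neg.div_const c

noncomputable def oddGaussian (t s : ℝ) : ℝ := s * exp (-s ^ 2 / (4 * t))

noncomputable def oddGaussianDeriv (t s : ℝ) : ℝ := exp (-s ^ 2 / (4 * t)) * (1 - s ^ 2 / (2 * t))

@[fun_prop]
lemma continuous_oddGaussian (t : ℝ) : Continuous (oddGaussian t) := by
  unfold oddGaussian; fun_prop

section
variable {t : ℝ}

lemma hasDerivAt_oddGaussian (ht : t ≠ 0) (s : ℝ) :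
    HasDerivAt (oddGaussian t) (oddGaussianDeriv t s) s := by
  refine ((hasDerivAt_id s).mul (hasDerivAt_neg_sq_div (4 * t) s).exp).congr_deriv ?_
  simp only [oddGaussianDeriv, id]
  field_simp
  ring

lemma integral_oddGaussian (ht : 0 < t) (a b : ℝ) :
    ∫ s in a..b, oddGaussian t s = 2 * t * (exp (-a ^ 2 / (4 * t)) - exp (-b ^ 2 / (4 * t))) := by
  have hderiv (s : ℝ) :
      HasDerivAt (fun s => -(2 * t) * exp (-s ^ 2 / (4 * t))) (oddGaussian t s) s := by
    refine ((hasDerivAt_neg_sq_div (4 * t) s).exp.const_mul (-(2 * t))).congr_deriv ?_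
    simp only [oddGaussian]
    field_simp
    ring
  rw [intervalIntegral.integral_eq_sub_of_hasDerivAt (fun s _ => hderiv s)
    ((continuous_oddGaussian t).intervalIntegrable a b)]
  ring

lemma integral_oddGaussian_le (ht : 0 < t) (a b : ℝ) : ∫ s in a..b, oddGaussian t s ≤ 2 * t := by
  rw [integral_oddGaussian ht]
  have ha : exp (-a ^ 2 / (4 * t)) ≤ 1 :=
    exp_le_one_iff.mpr (by rw [neg_div]; exact neg_nonpos.mpr (by positivity))
  nlinarith [exp_pos (-b ^ 2 / (4 * t))]

lemma integral_abs_oddGaussian_le (ht : 0 < t) {a b : ℝ} (hab : a ≤ b) :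
    ∫ s in a..b, |oddGaussian t s| ≤ 4 * t := by
  have hcont : Continuous fun s => |oddGaussian t s| := by fun_prop
  have hneg : ∫ s in min a 0..0, |oddGaussian t s| ≤ 2 * t := by
    calc ∫ s in min a 0..0, |oddGaussian t s| = ∫ s in min a 0..0, -oddGaussian t s := by
          refine intervalIntegral.integral_congr fun s hs => abs_of_nonpos ?_
          rw [Set.uIcc_of_le (min_le_right a 0)] at hs
          exact mul_nonpos_of_nonpos_of_nonneg hs.2 (exp_pos _).le
      _ = ∫ s in -0..-min a 0, oddGaussian t s := by
          rw [← intervalIntegral.integral_comp_neg]; simp [oddGaussian]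
      _ ≤ 2 * t := integral_oddGaussian_le ht _ _
  have hpos : ∫ s in 0..max b 0, |oddGaussian t s| ≤ 2 * t := by
    calc ∫ s in 0..max b 0, |oddGaussian t s| = ∫ s in 0..max b 0, oddGaussian t s := by
          refine intervalIntegral.integral_congr fun s hs => abs_of_nonneg ?_
          rw [Set.uIcc_of_le (le_max_right b 0)] at hs
          exact mul_nonneg hs.1 (exp_pos _).le
      _ ≤ 2 * t := integral_oddGaussian_le ht _ _
  calc ∫ s in a..b, |oddGaussian t s| ≤ ∫ s in min a 0..max b 0, |oddGaussian t s| :=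
        intervalIntegral.integral_mono_interval (min_le_left a 0) hab (le_max_left b 0)
          (Filter.Eventually.of_forall fun s => abs_nonneg _) (hcont.intervalIntegrable _ _)
    _ = (∫ s in min a 0..0, |oddGaussian t s|) + ∫ s in 0..max b 0, |oddGaussian t s| :=
        (intervalIntegral.integral_add_adjacent_intervals (hcont.intervalIntegrable _ _)
          (hcont.intervalIntegrable _ _)).symm
    _ ≤ 4 * t := by linarith

lemma abs_oddGaussianDeriv_le_of_half_le (ht : 0 < t) {y ξ : ℝ} (hy : 0 ≤ y) (hξ : y / 2 ≤ ξ) :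
    |oddGaussianDeriv t ξ| ≤ 3 * exp (-y ^ 2 / (4 * (8 * t))) := by
  have hu : 0 ≤ ξ ^ 2 / (4 * t) := by positivity
  have hkey := abs_one_sub_two_mul_mul_exp_neg_le hu
  have hsq : y ^ 2 / 4 ≤ ξ ^ 2 := by nlinarith
  calc |oddGaussianDeriv t ξ| = |1 - 2 * (ξ ^ 2 / (4 * t))| * exp (-(ξ ^ 2 / (4 * t))) := by
        rw [oddGaussianDeriv, abs_mul, abs_of_pos (exp_pos _), mul_comm]
        ring_nf
    _ ≤ 3 * exp (-(ξ ^ 2 / (4 * t) / 2)) := hkey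
    _ ≤ 3 * exp (-y ^ 2 / (4 * (8 * t))) := by
        gcongr
        rw [div_div, neg_div, neg_le_neg_iff, div_le_div_iff₀ (by positivity) (by positivity)]
        nlinarith

lemma abs_oddGaussian_sub_le (ht : 0 < t) {x y : ℝ} (hx : 0 ≤ x) (hxy : 2 * x ≤ y) :
    |oddGaussian t (y + x) - oddGaussian t (y - x)| ≤
      3 * exp (-y ^ 2 / (4 * (8 * t))) * (2 * x) := by
  have hmvt := norm_image_sub_le_of_norm_deriv_le_segment' (f := oddGaussian t)
    (a := y - x) (b := y + x)
    (fun ξ _ => (hasDerivAt_oddGaussian ht.ne' ξ).hasDerivWithinAt)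
    (fun ξ hξ => abs_oddGaussianDeriv_le_of_half_le ht (y := y) (by linarith) (by linarith [hξ.1]))
    (y + x) ⟨by linarith, le_rfl⟩
  rwa [Real.norm_eq_abs, add_sub_sub_cancel, ← two_mul] at hmvt

end

lemma dJdy_eq (t x y : ℝ) :
    dJdy t x y = (sqrt (4 * π * t))⁻¹ * (1 / (2 * t)) *
      (oddGaussian t (y + x) - oddGaussian t (y - x)) := by
  simp only [dJdy, oddGaussian]
  ring_nf

lemma Ktilde_zero (t y : ℝ) :
    Ktilde t 0 y = (sqrt (4 * π * t))⁻¹ * (1 / (2 * t)) * (2 * y * oddGaussianDeriv t y) := by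
  simp only [Ktilde, if_true, oddGaussianDeriv]
  ring

lemma abs_Ktilde_le_of_le_two_mul {t x y : ℝ} (ht : 0 < t) (hx : 0 < x) (hy : 0 ≤ y)
    (hyx : y ≤ 2 * x) :
    |Ktilde t x y| ≤ (sqrt (4 * π * t))⁻¹ * (1 / (2 * t)) *
      (2 * |oddGaussian t (y + x)| + 2 * |oddGaussian t (y - x)|) := by
  have hyx' : y / x ≤ 2 := by rw [div_le_iff₀ hx]; linarith
  rw [Ktilde, if_neg hx.ne', dJdy_eq, abs_mul, abs_mul, abs_of_nonneg (by positivity : 0 ≤ y / x),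
    abs_of_nonneg (by positivity : 0 ≤ (sqrt (4 * π * t))⁻¹ * (1 / (2 * t)))]
  calc y / x * ((sqrt (4 * π * t))⁻¹ * (1 / (2 * t)) *
        |oddGaussian t (y + x) - oddGaussian t (y - x)|)
      ≤ 2 * ((sqrt (4 * π * t))⁻¹ * (1 / (2 * t)) *
        (|oddGaussian t (y + x)| + |oddGaussian t (y - x)|)) := by
        gcongr
        exact abs_sub _ _
    _ = _ := by ring

lemma abs_Ktilde_le_of_two_mul_le {t x y : ℝ} (ht : 0 < t) (hx : 0 ≤ x) (hxy : 2 * x ≤ y) :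
    |Ktilde t x y| ≤ (sqrt (4 * π * t))⁻¹ * (1 / (2 * t)) * (6 * |oddGaussian (8 * t) y|) := by
  have hy : 0 ≤ y := by linarith
  have hc : 0 ≤ (sqrt (4 * π * t))⁻¹ * (1 / (2 * t)) := by positivity
  rw [oddGaussian, abs_mul, abs_of_nonneg hy, abs_of_pos (exp_pos _)]
  rcases hx.eq_or_lt with rfl | hx
  · rw [Ktilde_zero, abs_mul, abs_of_nonneg hc, abs_mul, abs_of_nonneg (by positivity : 0 ≤ 2 * y)]
    have hderiv := abs_oddGaussianDeriv_le_of_half_le ht hy (by linarith : y / 2 ≤ y)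
    calc _ ≤ (sqrt (4 * π * t))⁻¹ * (1 / (2 * t)) *
          (2 * y * (3 * exp (-y ^ 2 / (4 * (8 * t))))) := by
          gcongr
      _ = _ := by ring
  · rw [Ktilde, if_neg hx.ne', dJdy_eq, abs_mul, abs_mul, abs_of_nonneg (by positivity : 0 ≤ y / x),
      abs_of_nonneg hc]
    calc _ ≤ y / x * ((sqrt (4 * π * t))⁻¹ * (1 / (2 * t)) *
          (3 * exp (-y ^ 2 / (4 * (8 * t))) * (2 * x))) := by
          gcongr
          exact abs_oddGaussian_sub_le ht hx.le hxy
      _ = _ := by field_simp; ring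

lemma abs_Ktilde_le {t x y : ℝ} (ht : 0 < t) (hx : 0 ≤ x) (hy : 0 ≤ y) :
    |Ktilde t x y| ≤ (sqrt (4 * π * t))⁻¹ * (1 / (2 * t)) *
      (2 * |oddGaussian t (y + x)| + 2 * |oddGaussian t (y - x)| +
        6 * |oddGaussian (8 * t) y|) := by
  have hc : 0 ≤ (sqrt (4 * π * t))⁻¹ * (1 / (2 * t)) := by positivity
  rcases le_or_gt (2 * x) y with hxy | hyx
  · calc _ ≤ _ := abs_Ktilde_le_of_two_mul_le ht hx hxy
      _ ≤ _ := mul_le_mul_of_nonneg_left (by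
          linarith [abs_nonneg (oddGaussian t (y + x)), abs_nonneg (oddGaussian t (y - x))]) hc
  · calc _ ≤ _ := abs_Ktilde_le_of_le_two_mul ht (by linarith) hy hyx.le
      _ ≤ _ := mul_le_mul_of_nonneg_left (by linarith [abs_nonneg (oddGaussian (8 * t) y)]) hc

lemma continuous_Ktilde (t x : ℝ) : Continuous (Ktilde t x) := by
  unfold Ktilde dJdy
  split_ifs <;> fun_prop

lemma integral_abs_Ktilde_le {t x : ℝ} (ht : 0 < t) (hx : 0 ≤ x) :
    ∫ y in (0 : ℝ)..1, |Ktilde t x y| ≤ 104 * (sqrt (4 * π * t))⁻¹ := by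
  have hI (f : ℝ → ℝ) (hf : Continuous f) : IntervalIntegrable f MeasureTheory.volume 0 1 :=
    hf.intervalIntegrable 0 1
  calc ∫ y in (0 : ℝ)..1, |Ktilde t x y|
      ≤ ∫ y in (0 : ℝ)..1, (sqrt (4 * π * t))⁻¹ * (1 / (2 * t)) *
        (2 * |oddGaussian t (y + x)| + 2 * |oddGaussian t (y - x)| + 6 * |oddGaussian (8 * t) y|) :=
        intervalIntegral.integral_mono_on zero_le_one (hI _ (continuous_Ktilde t x).abs)
          (hI _ (by fun_prop)) fun y hy => abs_Ktilde_le ht hx hy.1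
    _ = (sqrt (4 * π * t))⁻¹ * (1 / (2 * t)) *
        (2 * (∫ y in x..1 + x, |oddGaussian t y|) + 2 * (∫ y in -x..1 - x, |oddGaussian t y|)
          + 6 * ∫ y in (0 : ℝ)..1, |oddGaussian (8 * t) y|) := by
        rw [intervalIntegral.integral_const_mul, intervalIntegral.integral_add (hI _ (by fun_prop))
          (hI _ (by fun_prop)),
          intervalIntegral.integral_add (hI _ (by fun_prop)) (hI _ (by fun_prop))]
        simp only [intervalIntegral.integral_const_mul,
          intervalIntegral.integral_comp_add_right fun y => |oddGaussian t y|,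
          intervalIntegral.integral_comp_sub_right fun y => |oddGaussian t y|, zero_add, zero_sub]
    _ ≤ (sqrt (4 * π * t))⁻¹ * (1 / (2 * t)) * (2 * (4 * t) + 2 * (4 * t) + 6 * (4 * (8 * t))) := by
        gcongr
        · exact integral_abs_oddGaussian_le ht (by linarith)
        · exact integral_abs_oddGaussian_le ht (by linarith)
        · exact integral_abs_oddGaussian_le (by positivity) zero_le_one
    _ = 104 * (sqrt (4 * π * t))⁻¹ := by field_simp; ring

theorem stmt12 : ∃ C > 0, ∀ t > 0, ∀ x ∈ Set.Icc (0:ℝ) 1,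
    (∫ y in (0:ℝ)..1, |Ktilde t x y|) ≤ C / Real.sqrt t := by
  refine ⟨104, by norm_num, fun t ht x hx => (integral_abs_Ktilde_le ht hx.1).trans ?_⟩
  rw [div_eq_mul_inv]
  gcongr
  nlinarith [pi_gt_three]
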